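/- arXiv:math/0403390 — 2 statements merged into one kernel-verified Lean document; each statement's English description precedes it below -/
import Mathlib

section
/- For an odd prime p, suppose m ∈ M_N(ℤ) is a matrix not divisible by p, α ≥ 1, and ℓ is a prime with (1 + p^α m)^ℓ = 1 in GL_N(ℤ). Then this leads to a contradiction; i.e. no such m, α, ℓ exist. -/
/-- Key step of Minkowski's lemma: for an odd prime `p`, there is no matrix `m`
not divisible by `p`, integer `α ≥ 1` and prime `ℓ` with `(1 + p^α m)^ℓ = 1`. -/
theorem no_torsion_congruent_one (N p : ℕ) (hp : p.Prime) (hp3 : 3 ≤ p)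
    (m : Matrix (Fin N) (Fin N) ℤ) (hm : ¬ ∀ i j, (p : ℤ) ∣ m i j)
    (α : ℕ) (hα : 1 ≤ α) (ℓ : ℕ) (hℓ : ℓ.Prime)
    (h : ((1 : Matrix (Fin N) (Fin N) ℤ) + ((p : ℤ) ^ α) • m) ^ ℓ = 1) : False := by
  apply hm
  intro i j
  set y := ((p:ℤ)^α) • m with hy
  have hpow : ∀ k : ℕ, y ^ k = ((p:ℤ)^(α*k)) • m ^ k := by
    intro k; rw [hy, smul_pow, ← pow_mul]
  have hexp : (1 + y) ^ ℓ = ∑ k ∈ Finset.range (ℓ+1), (ℓ.choose k) • (((p:ℤ)^(α*k)) • m ^ k) := by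
    rw [add_comm, (Commute.one_right y).add_pow]
    refine Finset.sum_congr rfl fun k _ => ?_
    rw [one_pow, mul_one, hpow, ← (Nat.cast_commute (ℓ.choose k) (((p:ℤ)^(α*k)) • m ^ k)).eq,
      ← nsmul_eq_mul]
  rw [hexp, Finset.sum_range_succ'] at h
  simp only [Nat.mul_zero, pow_zero, one_smul, Nat.choose_zero_right] at h
  have h0 : ∑ k ∈ Finset.range ℓ, (ℓ.choose (k+1)) • (((p:ℤ)^(α*(k+1))) • m ^ (k+1)) = 0 :=
    add_eq_right.mp h
  -- two or more terms: ℓ ≥ 2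
  have hℓ2 : 2 ≤ ℓ := hℓ.two_le
  obtain ⟨n, rfl⟩ : ∃ n, ℓ = n + 1 := ⟨ℓ - 1, (Nat.succ_pred_eq_of_pos hℓ.pos).symm⟩
  rw [Finset.sum_range_succ'] at h0
  -- entrywise
  have he := congrArg (fun A => A i j) h0
  simp only [Matrix.add_apply, Matrix.sum_apply, Matrix.smul_apply, Matrix.zero_apply] at he
  simp only [smul_eq_mul, nsmul_eq_mul, Nat.mul_one, Nat.choose_one_right, pow_one,
    zero_add] at he
  -- he : ∑ k in range n, C(n+1, k+2) * (p^(α(k+2)) * (m^(k+2)) i j) + (n+1) * (p^α * m i j) = 0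
  have key : ((n+1 : ℕ) : ℤ) * ((p:ℤ)^α * m i j)
      = -∑ k ∈ Finset.range n, ((n+1).choose (k+1+1) : ℤ) * ((p:ℤ)^(α*(k+1+1)) * (m ^ (k+1+1)) i j) := by
    linarith [he]
  have hp0 : (p:ℤ) ≠ 0 := by exact_mod_cast hp.ne_zero
  have cancel : ∀ (a : ℕ) (x : ℤ), (p:ℤ)^(a+1) ∣ (p:ℤ)^a * x → (p:ℤ) ∣ x := by
    intro a x hx
    rw [pow_succ] at hx
    exact (mul_dvd_mul_iff_left (pow_ne_zero a hp0)).mp hx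
  have hpZ : Prime (p:ℤ) := Nat.prime_iff_prime_int.mp hp
  by_cases hcase : n + 1 = p
  · -- ℓ = p
    have hdvd : (p:ℤ)^(α+2) ∣ ((n+1:ℕ) : ℤ) * ((p:ℤ)^α * m i j) := by
      rw [key]
      refine dvd_neg.mpr (Finset.dvd_sum fun k hk => ?_)
      rcases lt_or_eq_of_le (Nat.succ_le_of_lt (Finset.mem_range.mp hk)) with hlt | heq
      · -- k+2 < n+1 = p : use p ∣ choose
        have h1 : (p:ℤ) ∣ ((n+1).choose (k+1+1) : ℤ) := by
          have : p ∣ (n+1).choose (k+1+1) := by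
            rw [hcase]
            exact Nat.Prime.dvd_choose_self hp (Nat.succ_ne_zero _) (by omega)
          exact_mod_cast Int.natCast_dvd_natCast.mpr this
        have h2 : (p:ℤ)^(α+1) ∣ (p:ℤ)^(α*(k+1+1)) := pow_dvd_pow _ (by nlinarith)
        have h3 := mul_dvd_mul h1 (dvd_mul_of_dvd_left h2 ((m ^ (k+1+1)) i j))
        rwa [← pow_succ'] at h3
      · -- k+2 = n+1 = p
        have hp3' : 3 ≤ n + 1 := hcase ▸ hp3
        have h2 : (p:ℤ)^(α+2) ∣ (p:ℤ)^(α*(k+1+1)) := pow_dvd_pow _ (by nlinarith)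
        exact (dvd_mul_of_dvd_left h2 _).mul_left _
    have hdvd' : (p:ℤ)^(α+1+1) ∣ (p:ℤ)^(α+1) * m i j := by
      have e : ((n+1:ℕ):ℤ) * ((p:ℤ)^α * m i j) = (p:ℤ)^(α+1) * m i j := by
        have : ((n+1:ℕ):ℤ) = (p:ℤ) := by exact_mod_cast congrArg (Nat.cast : ℕ → ℤ) hcase
        rw [this, pow_succ]; ring
      rw [show α+1+1 = α+2 from rfl, ← e]; exact hdvd
    exact cancel (α+1) _ hdvd'
  · -- ℓ ≠ p
    have hdvd : (p:ℤ)^(α+1) ∣ ((n+1:ℕ) : ℤ) * ((p:ℤ)^α * m i j) := by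
      rw [key]
      refine dvd_neg.mpr (Finset.dvd_sum fun k hk => ?_)
      have h2 : (p:ℤ)^(α+1) ∣ (p:ℤ)^(α*(k+1+1)) := pow_dvd_pow _ (by nlinarith)
      exact (dvd_mul_of_dvd_left h2 _).mul_left _
    have hdvd' : (p:ℤ)^(α+1) ∣ (p:ℤ)^α * (((n+1:ℕ):ℤ) * m i j) := by
      rw [show (p:ℤ)^α * (((n+1:ℕ):ℤ) * m i j) = ((n+1:ℕ):ℤ) * ((p:ℤ)^α * m i j) by ring]
      exact hdvd
    rcases hpZ.dvd_mul.mp (cancel α _ hdvd') with h1 | h1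
    · exact absurd (((Nat.prime_dvd_prime_iff_eq hp hℓ).mp (Int.natCast_dvd_natCast.mp h1)).symm) hcase
    · exact h1
end

section
/- The order of every finite subgroup of GL₂(ℤ) divides 24. -/
namespace GL2Minkowski
open Matrix

abbrev M2 := Matrix (Fin 2) (Fin 2) ℤ

lemma cayley (A : M2) : A * A = A.trace • A - A.det • (1 : M2) := by
  ext i j
  fin_cases i <;> fin_cases j <;>
    · simp only [Matrix.mul_apply, Matrix.trace_fin_two, Matrix.det_fin_two, Fin.sum_univ_two,
        Matrix.sub_apply, Matrix.smul_apply, smul_eq_mul, Matrix.one_apply]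
      norm_num; ring

def u (t d : ℤ) : ℕ → ℤ
  | 0 => 0
  | 1 => 1
  | n+2 => t * u t d (n+1) - d * u t d n

lemma pow_eq (A : M2) {t d : ℤ} (h : A * A = t • A - d • (1:M2)) :
    ∀ n, A ^ (n+1) = u t d (n+1) • A - (d * u t d n) • (1:M2)
  | 0 => by simp [u]
  | n+1 => by
    rw [pow_succ, pow_eq A h n, sub_mul, smul_mul_assoc, smul_mul_assoc, one_mul, h]
    show _ = u t d (n+2) • A - _
    simp only [u]
    module

lemma u_growth {t d : ℤ} (ht : 3 ≤ |t|) (hd : d = 1 ∨ d = -1) :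
    ∀ n, |u t d n| < |u t d (n+1)|
  | 0 => by simp [u]
  | n+1 => by
    have ih := u_growth ht hd n
    have h2 : u t d (n+2) = t * u t d (n+1) - d * u t d n := rfl
    have hb : (0:ℤ) ≤ |u t d n| := abs_nonneg _
    have h3 : |t * u t d (n+1)| - |d * u t d n| ≤ |u t d (n+2)| := by
      rw [h2]; exact abs_sub_abs_le_abs_sub _ _
    rw [abs_mul, abs_mul] at h3
    have hda : |d| = 1 := by rcases hd with rfl | rfl <;> norm_num
    nlinarith [abs_nonneg (u t d (n+1))]

lemma u_ne_zero {t d : ℤ} (ht : 3 ≤ |t|) (hd : d = 1 ∨ d = -1) (n : ℕ) :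
    u t d (n+1) ≠ 0 := by
  intro h
  have h1 := u_growth ht hd n
  rw [h] at h1
  simp at h1
  exact (abs_nonneg _).not_gt h1

lemma scalar_of_smul {A : M2} {c e : ℤ} (hc : c ≠ 0) (h : c • A = e • (1:M2)) :
    ∃ a : ℤ, A = a • (1:M2) := by
  refine ⟨A 0 0, ?_⟩
  have key : ∀ i j, c * A i j = e * (1:M2) i j := fun i j => congrFun (congrFun h i) j
  have h00 := key 0 0; have h01 := key 0 1; have h10 := key 1 0; have h11 := key 1 1
  simp [Matrix.one_apply] at h00 h01 h10 h11
  ext i j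
  fin_cases i <;> fin_cases j <;> simp [Matrix.smul_apply, Matrix.one_apply, smul_eq_mul]
  · tauto
  · tauto
  · exact mul_left_cancel₀ hc (h11.trans h00.symm)
lemma det_scalar (a : ℤ) : (a • (1:M2)).det = a * a := by
  simp only [Matrix.det_fin_two, Matrix.smul_apply, Matrix.one_apply, smul_eq_mul]
  norm_num

lemma no8_aux (A : M2) (t d : ℤ) (hch : A * A = t • A - d • (1:M2)) (hd : d = 1 ∨ d = -1)
    (hsc : ¬∃ a : ℤ, A = a • (1:M2)) (h8 : A ^ 8 = 1) (h4 : A ^ 4 ≠ 1) : False := by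
  have hpow := pow_eq A hch 7
  have h80 : u t d 8 • A = (1 + d * u t d 7) • (1:M2) := by
    rw [show (7:ℕ)+1 = 8 from rfl] at hpow
    rw [hpow] at h8
    rw [sub_eq_iff_eq_add.mp h8, add_smul, one_smul]
  have hu8 : u t d 8 = 0 := by
    by_contra hne
    exact hsc (scalar_of_smul hne h80)
  have htb : ¬ (3 ≤ |t|) := fun hab => u_ne_zero hab hd 7 hu8
  obtain ⟨hl, hr⟩ : -2 ≤ t ∧ t ≤ 2 := abs_le.mp (by omega)
  have ht0 : t = 0 := by
    rcases hd with rfl | rfl <;> (interval_cases t <;> first | rfl | (exfalso; norm_num [u] at hu8))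
  have hAA : A * A = (-d) • (1:M2) := by
    rw [hch, ht0, zero_smul, zero_sub, neg_smul]
  apply h4
  have h44 : A ^ 4 = (A*A) * (A*A) := by noncomm_ring
  rw [h44, hAA, smul_mul_smul_comm, one_mul, neg_mul_neg]
  have hd1 : d * d = 1 := by rcases hd with rfl | rfl <;> norm_num
  rw [hd1, one_smul]

lemma no_order_eight (A : M2) (hdet : A.det = 1 ∨ A.det = -1)
    (h8 : A ^ 8 = 1) (h4 : A ^ 4 ≠ 1) : False := by
  by_cases hsc : ∃ a : ℤ, A = a • (1:M2)
  · obtain ⟨a, rfl⟩ := hsc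
    rw [det_scalar] at hdet
    have ha : a * a = 1 := by
      rcases hdet with h | h
      · exact h
      · nlinarith [sq_nonneg a]
    apply h4
    have h1 : (a • (1:M2)) * (a • (1:M2)) = 1 := by
      rw [smul_mul_smul_comm, one_mul, ha, one_smul]
    have h44 : (a • (1:M2)) ^ 4 = ((a • (1:M2)) * (a • (1:M2))) * ((a • (1:M2)) * (a • (1:M2))) := by
      noncomm_ring
    rw [h44, h1, one_mul]
  · exact no8_aux A A.trace A.det (cayley A) hdet hsc h8 h4
lemma binom_sq_zero (N : M2) (hN : N * N = 0) :
    ∀ j : ℕ, (1 + N) ^ j = 1 + (j:ℤ) • N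
  | 0 => by simp
  | j+1 => by
    rw [pow_succ, binom_sq_zero N hN j]
    simp only [add_mul, mul_add, one_mul, mul_one, smul_mul_assoc, mul_smul_comm, smul_smul, hN,
      smul_zero]
    push_cast
    module

lemma ker_torsion_free (A : M2) (hdet : A.det = 1 ∨ A.det = -1) {m : ℕ} (hm : m ≠ 0)
    (hA : A ^ m = 1) (h3 : ∀ i j, (3:ℤ) ∣ (A - 1) i j) : A = 1 := by
  obtain ⟨a, ha⟩ := h3 0 0
  obtain ⟨c, hc⟩ := h3 0 1
  obtain ⟨e, he⟩ := h3 1 0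
  obtain ⟨b, hb⟩ := h3 1 1
  simp only [Matrix.sub_apply, Matrix.one_apply] at ha hb hc he
  norm_num at ha hb hc he
  have hA00 : A 0 0 = 3*a + 1 := by omega
  have hA11 : A 1 1 = 3*b + 1 := by omega
  have hdd : (3:ℤ) ∣ A.det - 1 := ⟨3*a*b + a + b - 3*c*e, by
    rw [Matrix.det_fin_two, hA00, hA11, hc, he]; ring⟩
  have hd1 : A.det = 1 := by
    rcases hdet with h | h
    · exact h
    · exfalso; rw [h] at hdd; norm_num at hdd
  have htd : (3:ℤ) ∣ A.trace - 2 := ⟨a + b, by rw [Matrix.trace_fin_two, hA00, hA11]; ring⟩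
  have hch : A * A = A.trace • A - (1:ℤ) • (1:M2) := by rw [← hd1]; exact cayley A
  obtain ⟨k, rfl⟩ := Nat.exists_eq_succ_of_ne_zero hm
  by_cases hsc : ∃ s : ℤ, A = s • (1:M2)
  · obtain ⟨s, rfl⟩ := hsc
    rw [det_scalar] at hd1
    have hs : s = 1 ∨ s = -1 := mul_self_eq_one_iff.mp hd1
    have hs3 : s = 3*a + 1 := by
      have := hA00
      simpa [Matrix.smul_apply, Matrix.one_apply] using this
    have : s = 1 := by omega
    rw [this, one_smul]
  · have hpow := pow_eq A hch k
    rw [hA] at hpow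
    have h80 : u A.trace 1 (k+1) • A = (1 + 1 * u A.trace 1 k) • (1:M2) := by
      rw [sub_eq_iff_eq_add.mp hpow.symm, add_smul, one_smul]
    have hu0 : u A.trace 1 (k+1) = 0 := by
      by_contra hne
      exact hsc (scalar_of_smul hne h80)
    have htb : ¬ (3 ≤ |A.trace|) := fun hab => u_ne_zero hab (Or.inl rfl) k hu0
    obtain ⟨hl, hr⟩ : -2 ≤ A.trace ∧ A.trace ≤ 2 := abs_le.mp (by omega)
    have ht2 : A.trace = 2 ∨ A.trace = -1 := by omega
    rcases ht2 with ht | ht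
    · -- parabolic case
      rw [ht] at hch
      have hN : (A - 1) * (A - 1) = 0 := by
        simp only [sub_mul, mul_sub, mul_one, one_mul, hch]
        module
      have hbin := binom_sq_zero (A - 1) hN (k+1)
      rw [add_sub_cancel] at hbin
      rw [hbin] at hA
      have hsm : ((k:ℤ)+1) • (A - 1) = 0 := by
        push_cast at hA
        linear_combination (norm := module) hA
      have hz : A - 1 = 0 := by
        ext i j
        have hij := congrFun (congrFun hsm i) j
        simp only [Matrix.smul_apply, Matrix.zero_apply, smul_eq_mul] at hij
        simp only [Matrix.zero_apply]
        have hk1 : ((k:ℤ)+1) ≠ 0 := by positivity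
        exact (mul_eq_zero.mp hij).resolve_left hk1
      linear_combination (norm := module) hz
    · -- order 3 case
      rw [ht] at hch
      have h3A : A ^ 3 = 1 := by
        have h33 : A ^ 3 = (A * A) * A := by noncomm_ring
        rw [h33, hch, sub_mul, smul_mul_assoc, one_smul, one_mul, hch]
        module
      set M : M2 := Matrix.of (fun i j => (A - 1) i j / 3) with hM
      have hAM : A = 1 + (3:ℤ) • M := by
        ext i j
        simp only [Matrix.add_apply, Matrix.smul_apply, hM, Matrix.of_apply, smul_eq_mul]
        have h9 : 3 * ((A - 1) i j / 3) = (A - 1) i j := Int.mul_ediv_cancel' (h3 i j)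
        simp only [Matrix.sub_apply, Matrix.one_apply] at h9 ⊢
        omega
      have hsq : A * A = 1 + (6:ℤ) • M + (9:ℤ) • (M * M) := by
        rw [hAM]
        simp only [add_mul, mul_add, one_mul, mul_one, smul_mul_assoc, mul_smul_comm, smul_smul]
        module
      have hcube : (9:ℤ) • M + (27:ℤ) • (M*M) + (27:ℤ) • (M*M*M) = 0 := by
        have h3' : (A * A) * A = 1 := by rw [← h3A]; noncomm_ring
        rw [hsq, hAM] at h3'
        simp only [add_mul, mul_add, one_mul, mul_one, smul_mul_assoc, mul_smul_comm, smul_smul]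
          at h3'
        linear_combination (norm := module) h3'
      set X : M2 := 1 + (3:ℤ) • M + (3:ℤ) • (M * M) with hX
      have hMX : (9:ℤ) • (M * X) = 0 := by
        rw [hX]
        simp only [mul_add, mul_one, mul_smul_comm, smul_smul, smul_add, ← mul_assoc]
        linear_combination (norm := module) hcube
      have hMX0 : M * X = 0 := by
        ext i j
        have hij := congrFun (congrFun hMX i) j
        simp only [Matrix.smul_apply, Matrix.zero_apply, smul_eq_mul] at hij
        simp only [Matrix.zero_apply]
        omega
      have hdetX : X.det ≠ 0 := by
        obtain ⟨w, hw⟩ : ∃ w, X.det = 3 * w + 1 := by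
          refine ⟨3*(M 0 0)*(M 1 1) + M 0 0 + M 1 1 + 3*(M 0 0)*((M*M) 1 1)
            + 3*((M*M) 0 0)*(M 1 1) + (M*M) 0 0 + (M*M) 1 1 + 3*((M*M) 0 0)*((M*M) 1 1)
            - 3*(M 0 1)*(M 1 0) - 3*(M 0 1)*((M*M) 1 0) - 3*((M*M) 0 1)*(M 1 0)
            - 3*((M*M) 0 1)*((M*M) 1 0), ?_⟩
          rw [hX]
          simp only [Matrix.det_fin_two, Matrix.add_apply, Matrix.smul_apply, Matrix.one_apply,
            smul_eq_mul]
          norm_num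
          ring
        omega
      have hM0 : M = 0 := by
        have h1 : M * X * X.adjugate = 0 := by rw [hMX0, zero_mul]
        rw [mul_assoc, Matrix.mul_adjugate] at h1
        rw [mul_smul_comm, mul_one] at h1
        ext i j
        have hij := congrFun (congrFun h1 i) j
        simp only [Matrix.smul_apply, Matrix.zero_apply, smul_eq_mul] at hij
        simp only [Matrix.zero_apply]
        rcases mul_eq_zero.mp hij with h | h
        · exact absurd h hdetX
        · exact h
      rw [hAM, hM0, smul_zero, add_zero]
abbrev G3 := GL (Fin 2) (ZMod 3)

def B : G3 :=
  ⟨!![1,1;2,1], !![2,1;2,2], by decide, by decide⟩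

lemma B8 : B ^ 8 = 1 := by
  ext : 1
  show (B.val) ^ 8 = 1
  decide

lemma B4 : B ^ 4 ≠ 1 := by
  intro h
  have : (B.val) ^ 4 = 1 := by rw [← Units.val_pow_eq_pow_val, h]; rfl
  revert this; decide

lemma orderB : orderOf B = 8 := by
  haveI : Fact (Nat.Prime 2) := ⟨by norm_num⟩
  have := orderOf_eq_prime_pow (x := B) (p := 2) (n := 2) (by exact_mod_cast B4) (by exact_mod_cast B8)
  simpa using this

lemma card_G3 : Nat.card G3 = 48 := by
  haveI : Fact (Nat.Prime 3) := ⟨by norm_num⟩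
  rw [Matrix.card_GL_field]
  simp [Fin.prod_univ_two]

lemma hfact48 : (Nat.factorization (Nat.card G3)) 2 = 4 := by
  rw [card_G3, show (48:ℕ) = 2^4*3 by norm_num, Nat.factorization_mul (by norm_num) (by norm_num)]
  rw [Nat.Prime.factorization_pow (by norm_num), Nat.Prime.factorization (by norm_num)]
  simp [Finsupp.single_apply]

lemma exists_order8 (H : Subgroup G3) (hH : Nat.card H = 16) : ∃ h ∈ H, orderOf h = 8 := by
  haveI : Fact (Nat.Prime 2) := ⟨by norm_num⟩
  have hQ : IsPGroup 2 (Subgroup.zpowers B) := by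
    apply IsPGroup.of_card (n := 3)
    rw [Nat.card_zpowers, orderB]; norm_num
  obtain ⟨P, hP⟩ := hQ.exists_le_sylow
  let H' : Sylow 2 G3 := Sylow.ofCard H (by rw [hH, hfact48]; norm_num)
  obtain ⟨g, hg⟩ := MulAction.exists_smul_eq G3 P H'
  have hBP : B ∈ (P : Subgroup G3) := hP (Subgroup.mem_zpowers B)
  refine ⟨g * B * g⁻¹, ?_, ?_⟩
  · have : g * B * g⁻¹ ∈ ((g • P : Sylow 2 G3) : Subgroup G3) := by
      rw [Sylow.smul_def, Sylow.pointwise_smul_def]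
      rw [Subgroup.mem_smul_pointwise_iff_exists]
      exact ⟨B, hBP, rfl⟩
    rw [hg] at this
    simpa [H'] using this
  · rw [show g * B * g⁻¹ = (MulAut.conj g) B from rfl]
    rw [MulEquiv.orderOf_eq]
    exact orderB

lemma no8GL (g : GL (Fin 2) ℤ) : orderOf g ≠ 8 := by
  intro h
  set A : M2 := (g : Matrix (Fin 2) (Fin 2) ℤ) with hA
  have hdet : A.det = 1 ∨ A.det = -1 :=
    Int.isUnit_iff.mp ((Matrix.isUnit_iff_isUnit_det A).mp g.isUnit)
  have h8 : A ^ 8 = 1 := by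
    have : g ^ 8 = 1 := by rw [← h]; exact pow_orderOf_eq_one g
    calc A ^ 8 = ((g ^ 8 : GL (Fin 2) ℤ) : Matrix (Fin 2) (Fin 2) ℤ) := by
          rw [Units.val_pow_eq_pow_val]
    _ = 1 := by rw [this]; rfl
  have h4 : A ^ 4 ≠ 1 := by
    intro h4
    have hg4 : g ^ 4 = 1 := by
      ext : 1
      rw [Units.val_pow_eq_pow_val]
      exact h4
    have := orderOf_dvd_of_pow_eq_one hg4
    rw [h] at this
    omega
  exact no_order_eight A hdet h8 h4

end GL2Minkowski

open GL2Minkowski Matrix in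
/-- The order of every finite subgroup of `GL₂(ℤ)` divides `24`. -/
theorem finite_subgroup_GL2_card_dvd_24 (F : Subgroup (GL (Fin 2) ℤ)) (hF : Finite F) :
    Nat.card F ∣ 24 := by
  haveI : Fact (Nat.Prime 2) := ⟨by norm_num⟩
  set π : GL (Fin 2) ℤ →* G3 := Matrix.GeneralLinearGroup.map (Int.castRingHom (ZMod 3)) with hπ
  set f : F →* G3 := π.comp F.subtype with hf
  have hker : ∀ x : F, f x = 1 → x = 1 := by
    intro x hx
    set A : M2 := ((x : GL (Fin 2) ℤ) : Matrix (Fin 2) (Fin 2) ℤ) with hA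
    have hdet : A.det = 1 ∨ A.det = -1 :=
      Int.isUnit_iff.mp ((Matrix.isUnit_iff_isUnit_det A).mp (x : GL (Fin 2) ℤ).isUnit)
    have hm : orderOf x ≠ 0 := (orderOf_pos x).ne'
    have hAm : A ^ (orderOf x) = 1 := by
      have h1 : x ^ (orderOf x) = 1 := pow_orderOf_eq_one x
      have h2 : ((x : GL (Fin 2) ℤ)) ^ (orderOf x) = 1 := by
        rw [← SubmonoidClass.coe_pow, h1]; rfl
      calc A ^ (orderOf x) = (((x : GL (Fin 2) ℤ) ^ (orderOf x) : GL (Fin 2) ℤ) :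
            Matrix (Fin 2) (Fin 2) ℤ) := by rw [Units.val_pow_eq_pow_val]
      _ = 1 := by rw [h2]; rfl
    have hmap : A.map (Int.cast : ℤ → ZMod 3) = 1 := by
      have : (f x).val = (1 : G3).val := by rw [hx]
      simpa [hf, hπ, Matrix.GeneralLinearGroup.map, RingHom.mapMatrix] using this
    have h3 : ∀ i j, (3:ℤ) ∣ (A - 1) i j := by
      intro i j
      have hij : ((A i j : ℤ) : ZMod 3) = (1 : Matrix (Fin 2) (Fin 2) (ZMod 3)) i j := by
        rw [← hmap]; simp [Matrix.map_apply]
      have hz : (((A - 1) i j : ℤ) : ZMod 3) = 0 := by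
        rw [Matrix.sub_apply, Int.cast_sub, hij]
        fin_cases i <;> fin_cases j <;> simp [Matrix.one_apply]
      exact_mod_cast (ZMod.intCast_zmod_eq_zero_iff_dvd _ 3).mp hz
    have hA1 : A = 1 := ker_torsion_free A hdet hm hAm h3
    have : (x : GL (Fin 2) ℤ) = 1 := Units.ext hA1
    exact Subtype.ext this
  have hinj : Function.Injective f := (injective_iff_map_eq_one f).mpr hker
  have hdvd : Nat.card F ∣ 48 := by
    have e1 : Nat.card F = Nat.card f.range :=
      Nat.card_congr (MulEquiv.toEquiv (MonoidHom.ofInjective hinj))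
    rw [e1, ← card_G3]
    exact Subgroup.card_subgroup_dvd_card f.range
  have h16 : ¬ (16 ∣ Nat.card F) := by
    intro h16
    obtain ⟨K, hK⟩ := Sylow.exists_subgroup_card_pow_prime (G := F) 2 (n := 4)
      (by norm_num; exact h16)
    have hcard : Nat.card (K.map f) = 16 := by
      rw [← Nat.card_congr (MulEquiv.toEquiv (K.equivMapOfInjective f hinj)), hK]; norm_num
    obtain ⟨h, hmem, hord⟩ := exists_order8 (K.map f) hcard
    obtain ⟨x, hxK, rfl⟩ := Subgroup.mem_map.mp hmem
    have ho1 : orderOf x = 8 := by rw [← orderOf_injective f hinj x, hord]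
    have ho2 : orderOf ((x : GL (Fin 2) ℤ)) = 8 := by
      rw [← ho1]; exact orderOf_injective F.subtype F.subtype_injective x
    exact no8GL _ ho2
  have hle : Nat.card F ≤ 48 := Nat.le_of_dvd (by norm_num) hdvd
  interval_cases h : (Nat.card F) <;> omega
end
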